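/- arXiv:1609.02865 — 2 statements merged into one kernel-verified Lean document; each statement's English description precedes it below -/
import Mathlib

section
/- Let S be a polycyclic monoid endowed with the topology τ = {U ⊆ S : if 0 ∈ U then S∖U is finite} (the topology of the one-point compactification of the discrete space S∖{0}, with 0 as the point at infinity). Then S is a compact Hausdorff space and multiplication in S is separately continuous, i.e., S is a compact semitopological monoid. -/
/-- A polycyclic monoid: an inverse monoid `S` with a two-sided zero `0 ≠ 1`
(encoded via `MonoidWithZero`), with inversion `inv` (the unique inverse
in the sense of inverse semigroups), generated (as a semigroup) by a set `Λ`
with `x * inv x = 1` for `x ∈ Λ` and `x * inv y = 0` for distinct `x, y ∈ Λ`. -/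
structure IsPolycyclicMonoid (S : Type*) [MonoidWithZero S] (inv : S → S) (Λ : Set S) : Prop where
  inv_inverse : ∀ a : S, a * inv a * a = a ∧ inv a * a * inv a = inv a
  inv_unique : ∀ a b : S, a * b * a = a → b * a * b = b → b = inv a
  zero_ne_one : (0 : S) ≠ 1
  gen_unit : ∀ x ∈ Λ, x * inv x = 1
  gen_zero : ∀ x ∈ Λ, ∀ y ∈ Λ, x ≠ y → x * inv y = 0
  generates : Subsemigroup.closure (Λ ∪ inv '' Λ) = ⊤

/-- The Green `R`-class of `u`: the set of `x` with `xS = uS`. -/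
def greenR {S : Type*} [Mul S] (u : S) : Set S :=
  {x | {t | ∃ s, t = x * s} = {t | ∃ s, t = u * s}}

set_option linter.unusedSectionVars false
namespace PMaux

variable {S : Type*} [MonoidWithZero S] {inv : S → S} {Λ : Set S}

/-- product of the reversed list -/
def ev (l : List S) : S := l.foldr (fun x acc => acc * x) 1

/-- product of inverses -/
def iv (inv : S → S) (l : List S) : S := l.foldr (fun x acc => inv x * acc) 1

@[simp] lemma ev_nil : ev ([] : List S) = 1 := rfl
@[simp] lemma ev_cons (x : S) (t : List S) : ev (x :: t) = ev t * x := rfl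
@[simp] lemma iv_nil : iv inv ([] : List S) = 1 := rfl
@[simp] lemma iv_cons (x : S) (t : List S) : iv inv (x :: t) = inv x * iv inv t := rfl

lemma ev_append (a b : List S) : ev (a ++ b) = ev b * ev (a : List S) := by
  induction a with
  | nil => simp
  | cons x t ih => simp [ih, mul_assoc]

lemma iv_append (a b : List S) : iv inv (a ++ b) = iv inv a * iv inv b := by
  induction a with
  | nil => simp
  | cons x t ih => simp [ih, mul_assoc]

/-- all letters from Λ -/
def OKw (Λ : Set S) (l : List S) : Prop := ∀ x ∈ l, x ∈ Λ

lemma OKw_nil : OKw Λ ([] : List S) := fun x hx => absurd hx List.not_mem_nil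

lemma OKw_cons {x : S} {t : List S} (h : OKw Λ (x :: t)) : x ∈ Λ ∧ OKw Λ t :=
  ⟨h x List.mem_cons_self, fun y hy => h y (List.mem_cons_of_mem x hy)⟩

lemma OKw_append {a b : List S} (ha : OKw Λ a) (hb : OKw Λ b) : OKw Λ (a ++ b) := by
  intro x hx
  rcases List.mem_append.1 hx with h | h
  · exact ha x h
  · exact hb x h

lemma OKw_of_append {a b : List S} (h : OKw Λ (a ++ b)) : OKw Λ a ∧ OKw Λ b :=
  ⟨fun x hx => h x (List.mem_append.2 (Or.inl hx)),
   fun x hx => h x (List.mem_append.2 (Or.inr hx))⟩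

variable (hS : IsPolycyclicMonoid S inv Λ)
include hS

lemma ev_mul_iv {w : List S} (hw : OKw Λ w) : ev w * iv inv w = 1 := by
  induction w with
  | nil => simp
  | cons x t ih =>
    obtain ⟨hx, ht⟩ := OKw_cons hw
    have hx1 := hS.gen_unit x hx
    calc ev (x :: t) * iv inv (x :: t) = ev t * (x * inv x) * iv inv t := by
          simp [mul_assoc]
      _ = ev t * iv inv t := by rw [hx1, mul_one]
      _ = 1 := ih ht

lemma nf_ne_zero {p q : List S} (hp : OKw Λ p) (hq : OKw Λ q) :
    iv inv p * ev q ≠ 0 := by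
  intro h
  have h1 : ev p * (iv inv p * ev q) * iv inv q = 1 := by
    calc ev p * (iv inv p * ev q) * iv inv q
        = (ev p * iv inv p) * (ev q * iv inv q) := by simp [mul_assoc]
      _ = 1 := by rw [ev_mul_iv hS hp, ev_mul_iv hS hq, one_mul]
  rw [h, mul_zero, zero_mul] at h1
  exact hS.zero_ne_one h1

lemma ev_ne_zero {q : List S} (hq : OKw Λ q) : ev q ≠ 0 := by
  have := nf_ne_zero hS (OKw_nil (Λ := Λ)) hq
  simpa using this

lemma iv_ne_zero {p : List S} (hp : OKw Λ p) : iv inv p ≠ 0 := by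
  have := nf_ne_zero hS hp (OKw_nil (Λ := Λ))
  simpa using this

lemma inv_mul_self_ne_one {x : S} (hx : x ∈ Λ) : inv x * x ≠ 1 := by
  intro h
  have hΛ : ∀ y ∈ Λ, y = x := by
    intro y hy
    by_contra hyx
    have h0 : y * inv x = 0 := hS.gen_zero y hy x hx hyx
    have hy0 : y = 0 := by
      calc y = y * (inv x * x) := by rw [h, mul_one]
        _ = (y * inv x) * x := by rw [mul_assoc]
        _ = 0 := by rw [h0, zero_mul]
    have h1 := hS.gen_unit y hy
    rw [hy0, zero_mul] at h1
    exact hS.zero_ne_one h1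
  have hU : ∀ s ∈ Subsemigroup.closure (Λ ∪ inv '' Λ), IsUnit s := by
    intro s hs
    induction hs using Subsemigroup.closure_induction with
    | mem z hz =>
      rcases hz with hz | ⟨y, hy, rfl⟩
      · rcases hΛ z hz with rfl
        exact isUnit_iff_exists.2 ⟨inv z, hS.gen_unit z hz, h⟩
      · rcases hΛ y hy with rfl
        exact isUnit_iff_exists.2 ⟨y, h, hS.gen_unit y hy⟩
    | mul a b ha hb iha ihb => exact iha.mul ihb
  have h0 : IsUnit (0 : S) := hU 0 (by rw [hS.generates]; exact Subsemigroup.mem_top 0)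
  exact hS.zero_ne_one (isUnit_zero_iff.1 h0)

lemma ev_one_nil {q : List S} (hq : OKw Λ q) (h : ev q = 1) : q = [] := by
  cases q with
  | nil => rfl
  | cons y t =>
    exfalso
    obtain ⟨hy, ht⟩ := OKw_cons hq
    have hq1 : ev t * y = 1 := h
    have het : ev t = inv y := by
      calc ev t = ev t * (y * inv y) := by rw [hS.gen_unit y hy, mul_one]
        _ = (ev t * y) * inv y := by rw [mul_assoc]
        _ = inv y := by rw [hq1, one_mul]
    exact inv_mul_self_ne_one hS hy (by rw [← het]; exact hq1)

lemma iv_one_nil {q : List S} (hq : OKw Λ q) (h : iv inv q = 1) : q = [] := by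
  cases q with
  | nil => rfl
  | cons y t =>
    exfalso
    obtain ⟨hy, ht⟩ := OKw_cons hq
    have hq1 : inv y * iv inv t = 1 := h
    have het : iv inv t = y := by
      calc iv inv t = (y * inv y) * iv inv t := by rw [hS.gen_unit y hy, one_mul]
        _ = y * (inv y * iv inv t) := by rw [mul_assoc]
        _ = y := by rw [hq1, mul_one]
    exact inv_mul_self_ne_one hS hy (by rw [← hq1, het])

lemma ev_inj : ∀ (q₁ q₂ : List S), OKw Λ q₁ → OKw Λ q₂ → ev q₁ = ev q₂ → q₁ = q₂ := by
  intro q₁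
  induction q₁ with
  | nil =>
    intro q₂ _ hq₂ h
    exact (ev_one_nil hS hq₂ h.symm).symm
  | cons x t₁ ih =>
    intro q₂ hq₁ hq₂ h
    obtain ⟨hx, ht₁⟩ := OKw_cons hq₁
    cases q₂ with
    | nil => exact absurd (ev_one_nil hS hq₁ h) (by simp)
    | cons y t₂ =>
      obtain ⟨hy, ht₂⟩ := OKw_cons hq₂
      have h' : ev t₁ * x = ev t₂ * y := h
      by_cases hxy : x = y
      · subst hxy
        have het : ev t₁ = ev t₂ := by
          calc ev t₁ = ev t₁ * (x * inv x) := by rw [hS.gen_unit x hx, mul_one]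
            _ = (ev t₂ * x) * inv x := by rw [← mul_assoc, h']
            _ = ev t₂ * (x * inv x) := by rw [mul_assoc]
            _ = ev t₂ := by rw [hS.gen_unit x hx, mul_one]
        rw [ih t₂ ht₁ ht₂ het]
      · exfalso
        have h0 : x * inv y = 0 := hS.gen_zero x hx y hy hxy
        have : ev t₂ = 0 := by
          calc ev t₂ = ev t₂ * (y * inv y) := by rw [hS.gen_unit y hy, mul_one]
            _ = (ev t₂ * y) * inv y := by rw [mul_assoc]
            _ = (ev t₁ * x) * inv y := by rw [h']
            _ = ev t₁ * (x * inv y) := by rw [mul_assoc]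
            _ = 0 := by rw [h0, mul_zero]
        exact ev_ne_zero hS ht₂ this

lemma iv_inj : ∀ (q₁ q₂ : List S), OKw Λ q₁ → OKw Λ q₂ → iv inv q₁ = iv inv q₂ → q₁ = q₂ := by
  intro q₁
  induction q₁ with
  | nil =>
    intro q₂ _ hq₂ h
    exact (iv_one_nil hS hq₂ h.symm).symm
  | cons x t₁ ih =>
    intro q₂ hq₁ hq₂ h
    obtain ⟨hx, ht₁⟩ := OKw_cons hq₁
    cases q₂ with
    | nil => exact absurd (iv_one_nil hS hq₁ h) (by simp)
    | cons y t₂ =>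
      obtain ⟨hy, ht₂⟩ := OKw_cons hq₂
      have h' : inv x * iv inv t₁ = inv y * iv inv t₂ := h
      by_cases hxy : x = y
      · subst hxy
        have het : iv inv t₁ = iv inv t₂ := by
          calc iv inv t₁ = (x * inv x) * iv inv t₁ := by rw [hS.gen_unit x hx, one_mul]
            _ = x * (inv x * iv inv t₁) := by rw [mul_assoc]
            _ = x * (inv x * iv inv t₂) := by rw [h']
            _ = (x * inv x) * iv inv t₂ := by rw [mul_assoc]
            _ = iv inv t₂ := by rw [hS.gen_unit x hx, one_mul]
        rw [ih t₂ ht₁ ht₂ het]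
      · exfalso
        have h0 : x * inv y = 0 := hS.gen_zero x hx y hy hxy
        have : iv inv t₁ = 0 := by
          calc iv inv t₁ = (x * inv x) * iv inv t₁ := by rw [hS.gen_unit x hx, one_mul]
            _ = x * (inv x * iv inv t₁) := by rw [mul_assoc]
            _ = x * (inv y * iv inv t₂) := by rw [h']
            _ = (x * inv y) * iv inv t₂ := by rw [mul_assoc]
            _ = 0 := by rw [h0, zero_mul]
        exact iv_ne_zero hS ht₁ this

lemma iv_ev_one_nil : ∀ (w : List S), OKw Λ w → iv inv w * ev w = 1 → w = [] := by
  intro w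
  induction w with
  | nil => intro _ _; rfl
  | cons x t ih =>
    intro hw h
    exfalso
    obtain ⟨hx, ht⟩ := OKw_cons hw
    have key : iv inv t * ev t = 1 := by
      calc iv inv t * ev t
          = (x * inv x) * (iv inv t * ev t) * (x * inv x) := by
            rw [hS.gen_unit x hx]; rw [one_mul, mul_one]
        _ = x * ((inv x * iv inv t) * (ev t * x)) * inv x := by
            simp [mul_assoc]
        _ = x * 1 * inv x := by
            have h' : (inv x * iv inv t) * (ev t * x) = 1 := by
              have := h; simpa [mul_assoc] using this
            rw [h']
        _ = 1 := by rw [mul_one, hS.gen_unit x hx]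
    have ht0 : t = [] := ih ht key
    subst ht0
    have : inv x * x = 1 := by simpa using h
    exact inv_mul_self_ne_one hS hx this

lemma reduce : ∀ (v p : List S), OKw Λ v → OKw Λ p →
    ev v * iv inv p = 0 ∨
    (∃ w, OKw Λ w ∧ v = p ++ w ∧ ev v * iv inv p = ev w) ∨
    (∃ w, OKw Λ w ∧ p = v ++ w ∧ ev v * iv inv p = iv inv w) := by
  intro v
  induction v with
  | nil =>
    intro p _ hp
    exact Or.inr (Or.inr ⟨p, hp, rfl, by simp⟩)
  | cons x v' ih =>
    intro p hv hp
    obtain ⟨hx, hv'⟩ := OKw_cons hv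
    cases p with
    | nil =>
      exact Or.inr (Or.inl ⟨x :: v', hv, rfl, by simp⟩)
    | cons y p' =>
      obtain ⟨hy, hp'⟩ := OKw_cons hp
      by_cases hxy : x = y
      · subst hxy
        have hred : ev (x :: v') * iv inv (x :: p') = ev v' * iv inv p' := by
          calc ev (x :: v') * iv inv (x :: p')
              = ev v' * (x * inv x) * iv inv p' := by simp [mul_assoc]
            _ = ev v' * iv inv p' := by rw [hS.gen_unit x hx, mul_one]
        rcases ih p' hv' hp' with h0 | ⟨w, hw, hdec, hval⟩ | ⟨w, hw, hdec, hval⟩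
        · exact Or.inl (by rw [hred, h0])
        · exact Or.inr (Or.inl ⟨w, hw, by rw [hdec, List.cons_append], by rw [hred, hval]⟩)
        · exact Or.inr (Or.inr ⟨w, hw, by rw [hdec, List.cons_append], by rw [hred, hval]⟩)
      · left
        have h0 : x * inv y = 0 := hS.gen_zero x hx y hy hxy
        calc ev (x :: v') * iv inv (y :: p')
            = ev v' * (x * inv y) * iv inv p' := by simp [mul_assoc]
          _ = 0 := by rw [h0, mul_zero, zero_mul]

lemma nf_exists (s : S) :
    s = 0 ∨ ∃ p q, OKw Λ p ∧ OKw Λ q ∧ s = iv inv p * ev q := by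
  have hs : s ∈ Subsemigroup.closure (Λ ∪ inv '' Λ) := by
    rw [hS.generates]; exact Subsemigroup.mem_top s
  induction hs using Subsemigroup.closure_induction with
  | mem z hz =>
    right
    rcases hz with hz | ⟨y, hy, rfl⟩
    · refine ⟨[], [z], OKw_nil, ?_, by simp⟩
      intro a ha
      rw [List.mem_singleton.1 ha]; exact hz
    · exact ⟨[y], [], by intro a ha; rw [List.mem_singleton.1 ha]; exact hy, OKw_nil, by simp⟩
  | mul a b ha hb iha ihb =>
    rcases iha with rfl | ⟨p, q, hp, hq, rfl⟩
    · exact Or.inl (zero_mul b)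
    rcases ihb with rfl | ⟨p', q', hp', hq', rfl⟩
    · exact Or.inl (mul_zero _)
    rcases reduce hS q p' hq hp' with h0 | ⟨w, hw, hdec, hval⟩ | ⟨w, hw, hdec, hval⟩
    · left
      calc (iv inv p * ev q) * (iv inv p' * ev q')
          = iv inv p * (ev q * iv inv p') * ev q' := by simp [mul_assoc]
        _ = 0 := by rw [h0, mul_zero, zero_mul]
    · right
      refine ⟨p, q' ++ w, hp, OKw_append hq' hw, ?_⟩
      calc (iv inv p * ev q) * (iv inv p' * ev q')
          = iv inv p * (ev q * iv inv p') * ev q' := by simp [mul_assoc]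
        _ = iv inv p * ev w * ev q' := by rw [hval]
        _ = iv inv p * ev (q' ++ w) := by rw [ev_append, mul_assoc]
    · right
      refine ⟨p ++ w, q', OKw_append hp hw, hq', ?_⟩
      calc (iv inv p * ev q) * (iv inv p' * ev q')
          = iv inv p * (ev q * iv inv p') * ev q' := by simp [mul_assoc]
        _ = iv inv p * iv inv w * ev q' := by rw [hval]
        _ = iv inv (p ++ w) * ev q' := by rw [iv_append]

lemma nf_unique {u v u' v' : List S} (hu : OKw Λ u) (hv : OKw Λ v)
    (hu' : OKw Λ u') (hv' : OKw Λ v')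
    (h : iv inv u * ev v = iv inv u' * ev v') : u = u' ∧ v = v' := by
  have e1 : ev v = ev u * (iv inv u' * ev v') := by
    calc ev v = (ev u * iv inv u) * ev v := by rw [ev_mul_iv hS hu, one_mul]
      _ = ev u * (iv inv u * ev v) := by rw [mul_assoc]
      _ = ev u * (iv inv u' * ev v') := by rw [h]
  have h2 : ev v * iv inv v' = ev u * iv inv u' := by
    calc ev v * iv inv v' = ev u * iv inv u' * (ev v' * iv inv v') := by
          rw [e1]; simp [mul_assoc]
      _ = ev u * iv inv u' := by rw [ev_mul_iv hS hv', mul_one]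
  have hr : ev v * iv inv v' ≠ 0 := by
    intro h0
    have hm : iv inv u' * ev v' = iv inv u * ((ev v * iv inv v') * ev v') := by
      calc iv inv u' * ev v' = iv inv u' * (ev v' * iv inv v') * ev v' := by
            rw [ev_mul_iv hS hv', mul_one]
        _ = (iv inv u' * ev v') * iv inv v' * ev v' := by simp [mul_assoc]
        _ = (iv inv u * ev v) * iv inv v' * ev v' := by rw [h]
        _ = iv inv u * ((ev v * iv inv v') * ev v') := by simp [mul_assoc]
    rw [h0, zero_mul, mul_zero] at hm
    exact nf_ne_zero hS hu' hv' hm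
  rcases reduce hS v v' hv hv' with h0 | ⟨w, hw, hdec, hval⟩ | ⟨w, hw, hdec, hval⟩
  · exact absurd h0 hr
  · rcases reduce hS u u' hu hu' with h0' | ⟨w₂, hw₂, hdec₂, hval₂⟩ | ⟨w₂, hw₂, hdec₂, hval₂⟩
    · rw [← h2] at h0'; exact absurd h0' hr
    · -- v = v' ++ w, u = u' ++ w₂, both values ev
      have hww : w = w₂ := ev_inj hS w w₂ hw hw₂ (by rw [← hval, h2, hval₂])
      subst hww
      have hm : iv inv u' * ev v' = iv inv u' * (iv inv w * (ev w * ev v')) := by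
        calc iv inv u' * ev v' = iv inv u * ev v := h.symm
          _ = iv inv (u' ++ w) * ev (v' ++ w) := by rw [hdec₂, hdec]
          _ = (iv inv u' * iv inv w) * (ev w * ev v') := by rw [iv_append, ev_append]
          _ = iv inv u' * (iv inv w * (ev w * ev v')) := by rw [mul_assoc]
      have hm2 : ev v' = iv inv w * (ev w * ev v') := by
        calc ev v' = (ev u' * iv inv u') * ev v' := by rw [ev_mul_iv hS hu', one_mul]
          _ = ev u' * (iv inv u' * ev v') := by rw [mul_assoc]
          _ = ev u' * (iv inv u' * (iv inv w * (ev w * ev v'))) := by rw [← hm]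
          _ = (ev u' * iv inv u') * (iv inv w * (ev w * ev v')) := by rw [mul_assoc]
          _ = iv inv w * (ev w * ev v') := by rw [ev_mul_iv hS hu', one_mul]
      have hkey : iv inv w * ev w = 1 := by
        calc iv inv w * ev w = iv inv w * (ev w * (ev v' * iv inv v')) := by
              rw [ev_mul_iv hS hv', mul_one]
          _ = (iv inv w * (ev w * ev v')) * iv inv v' := by simp [mul_assoc]
          _ = ev v' * iv inv v' := by rw [← hm2]
          _ = 1 := ev_mul_iv hS hv'
      have hwnil : w = [] := iv_ev_one_nil hS w hw hkey
      subst hwnil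
      exact ⟨by simpa using hdec₂, by simpa using hdec⟩
    · -- v = v' ++ w (ev w), u' = u ++ w₂ (iv w₂)
      have hvw : ev w = iv inv w₂ := by rw [← hval, h2, hval₂]
      have h1 : iv inv (w₂ ++ w) = 1 := by
        rw [iv_append, ← hvw]; exact ev_mul_iv hS hw
      have hnil := iv_one_nil hS (OKw_append hw₂ hw) h1
      obtain ⟨rfl, rfl⟩ := List.append_eq_nil_iff.1 hnil
      exact ⟨by simpa using hdec₂.symm, by simpa using hdec⟩
  · rcases reduce hS u u' hu hu' with h0' | ⟨w₂, hw₂, hdec₂, hval₂⟩ | ⟨w₂, hw₂, hdec₂, hval₂⟩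
    · rw [← h2] at h0'; exact absurd h0' hr
    · -- v' = v ++ w (iv w), u = u' ++ w₂ (ev w₂)
      have hvw : iv inv w = ev w₂ := by rw [← hval, h2, hval₂]
      have h1 : iv inv (w ++ w₂) = 1 := by
        rw [iv_append, hvw]; exact ev_mul_iv hS hw₂
      have hnil := iv_one_nil hS (OKw_append hw hw₂) h1
      obtain ⟨rfl, rfl⟩ := List.append_eq_nil_iff.1 hnil
      exact ⟨by simpa using hdec₂, by simpa using hdec.symm⟩
    · -- v' = v ++ w, u' = u ++ w₂, both iv
      have hww : w = w₂ := iv_inj hS w w₂ hw hw₂ (by rw [← hval, h2, hval₂])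
      subst hww
      have hm : iv inv u * ev v = iv inv u * (iv inv w * (ev w * ev v)) := by
        calc iv inv u * ev v = iv inv u' * ev v' := h
          _ = iv inv (u ++ w) * ev (v ++ w) := by rw [hdec₂, hdec]
          _ = (iv inv u * iv inv w) * (ev w * ev v) := by rw [iv_append, ev_append]
          _ = iv inv u * (iv inv w * (ev w * ev v)) := by rw [mul_assoc]
      have hm2 : ev v = iv inv w * (ev w * ev v) := by
        calc ev v = (ev u * iv inv u) * ev v := by rw [ev_mul_iv hS hu, one_mul]
          _ = ev u * (iv inv u * ev v) := by rw [mul_assoc]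
          _ = ev u * (iv inv u * (iv inv w * (ev w * ev v))) := by rw [← hm]
          _ = (ev u * iv inv u) * (iv inv w * (ev w * ev v)) := by rw [mul_assoc]
          _ = iv inv w * (ev w * ev v) := by rw [ev_mul_iv hS hu, one_mul]
      have hkey : iv inv w * ev w = 1 := by
        calc iv inv w * ev w = iv inv w * (ev w * (ev v * iv inv v)) := by
              rw [ev_mul_iv hS hv, mul_one]
          _ = (iv inv w * (ev w * ev v)) * iv inv v := by simp [mul_assoc]
          _ = ev v * iv inv v := by rw [← hm2]
          _ = 1 := ev_mul_iv hS hv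
      have hwnil : w = [] := iv_ev_one_nil hS w hw hkey
      subst hwnil
      exact ⟨by simpa using hdec₂.symm, by simpa using hdec.symm⟩

lemma left_fiber_finite (a b : S) (hb : b ≠ 0) : {x : S | a * x = b}.Finite := by
  rcases nf_exists hS a with rfl | ⟨u, v, hu, hv, rfl⟩
  · apply Set.Finite.subset Set.finite_empty
    intro x hx
    simp only [Set.mem_setOf_eq, zero_mul] at hx
    exact (hb hx.symm).elim
  rcases nf_exists hS b with rfl | ⟨s, t, hs, ht, rfl⟩
  · exact absurd rfl hb
  set f : ℕ → S := fun k =>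
    iv inv (v.take k) * ev (t.take (t.length - (v.length - k))) with hf
  set g : S := iv inv (v ++ s.drop u.length) * ev t with hg
  apply Set.Finite.subset (((Set.finite_Iic v.length).image f).union (Set.finite_singleton g))
  intro x hx
  have hax : (iv inv u * ev v) * x = iv inv s * ev t := hx
  have hx0 : x ≠ 0 := by
    intro h0; rw [h0, mul_zero] at hax; exact nf_ne_zero hS hs ht hax.symm
  rcases nf_exists hS x with h0 | ⟨p, q, hp, hq, rfl⟩
  · exact absurd h0 hx0
  rcases reduce hS v p hv hp with h0 | ⟨w, hw, hdec, hval⟩ | ⟨w, hw, hdec, hval⟩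
  · exfalso
    have hz : (iv inv u * ev v) * (iv inv p * ev q) = 0 := by
      calc (iv inv u * ev v) * (iv inv p * ev q)
          = iv inv u * (ev v * iv inv p) * ev q := by simp [mul_assoc]
        _ = 0 := by rw [h0, mul_zero, zero_mul]
    exact nf_ne_zero hS hs ht (by rw [← hax, hz])
  · -- v = p ++ w
    have hbeq : iv inv u * ev (q ++ w) = iv inv s * ev t := by
      calc iv inv u * ev (q ++ w) = iv inv u * (ev w * ev q) := by rw [ev_append]
        _ = iv inv u * (ev v * iv inv p) * ev q := by rw [hval]; simp [mul_assoc]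
        _ = (iv inv u * ev v) * (iv inv p * ev q) := by simp [mul_assoc]
        _ = iv inv s * ev t := hax
    obtain ⟨hus, hqt⟩ := nf_unique hS hu (OKw_append hq hw) hs ht hbeq
    left
    refine ⟨p.length, ?_, ?_⟩
    · rw [Set.mem_Iic, hdec, List.length_append]; exact Nat.le_add_right _ _
    · have h1 : v.take p.length = p := by rw [hdec]; exact List.take_left
      have h2 : v.length - p.length = w.length := by rw [hdec]; simp
      have h3 : t.take (t.length - w.length) = q := by
        rw [← hqt, List.length_append, Nat.add_sub_cancel]; exact List.take_left
      rw [hf]; dsimp only; rw [h1, h2, h3]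
  · -- p = v ++ w
    have hbeq : iv inv (u ++ w) * ev q = iv inv s * ev t := by
      calc iv inv (u ++ w) * ev q = iv inv u * iv inv w * ev q := by rw [iv_append]
        _ = iv inv u * (ev v * iv inv p) * ev q := by rw [hval]
        _ = (iv inv u * ev v) * (iv inv p * ev q) := by simp [mul_assoc]
        _ = iv inv s * ev t := hax
    obtain ⟨hus, hqt⟩ := nf_unique hS (OKw_append hu hw) hq hs ht hbeq
    right
    have h1 : s.drop u.length = w := by rw [← hus]; exact List.drop_left
    rw [Set.mem_singleton_iff, hg, h1, ← hdec, hqt]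

lemma right_fiber_finite (a b : S) (hb : b ≠ 0) : {x : S | x * a = b}.Finite := by
  rcases nf_exists hS a with rfl | ⟨u, v, hu, hv, rfl⟩
  · apply Set.Finite.subset Set.finite_empty
    intro x hx
    simp only [Set.mem_setOf_eq, mul_zero] at hx
    exact (hb hx.symm).elim
  rcases nf_exists hS b with rfl | ⟨s, t, hs, ht, rfl⟩
  · exact absurd rfl hb
  set f : ℕ → S := fun k =>
    iv inv (s.take (s.length - (u.length - k))) * ev (u.take k) with hf
  set g : S := iv inv s * ev (u ++ t.drop v.length) with hg
  apply Set.Finite.subset (((Set.finite_Iic u.length).image f).union (Set.finite_singleton g))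
  intro x hx
  have hax : x * (iv inv u * ev v) = iv inv s * ev t := hx
  have hx0 : x ≠ 0 := by
    intro h0; rw [h0, zero_mul] at hax; exact nf_ne_zero hS hs ht hax.symm
  rcases nf_exists hS x with h0 | ⟨p, q, hp, hq, rfl⟩
  · exact absurd h0 hx0
  rcases reduce hS q u hq hu with h0 | ⟨w, hw, hdec, hval⟩ | ⟨w, hw, hdec, hval⟩
  · exfalso
    have hz : (iv inv p * ev q) * (iv inv u * ev v) = 0 := by
      calc (iv inv p * ev q) * (iv inv u * ev v)
          = iv inv p * (ev q * iv inv u) * ev v := by simp [mul_assoc]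
        _ = 0 := by rw [h0, mul_zero, zero_mul]
    exact nf_ne_zero hS hs ht (by rw [← hax, hz])
  · -- q = u ++ w
    have hbeq : iv inv p * ev (v ++ w) = iv inv s * ev t := by
      calc iv inv p * ev (v ++ w) = iv inv p * (ev w * ev v) := by rw [ev_append]
        _ = iv inv p * (ev q * iv inv u) * ev v := by rw [hval]; simp [mul_assoc]
        _ = (iv inv p * ev q) * (iv inv u * ev v) := by simp [mul_assoc]
        _ = iv inv s * ev t := hax
    obtain ⟨hps, hvt⟩ := nf_unique hS hp (OKw_append hv hw) hs ht hbeq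
    right
    have h1 : t.drop v.length = w := by rw [← hvt]; exact List.drop_left
    rw [Set.mem_singleton_iff, hg, h1, ← hdec, hps]
  · -- u = q ++ w
    have hbeq : iv inv (p ++ w) * ev v = iv inv s * ev t := by
      calc iv inv (p ++ w) * ev v = iv inv p * iv inv w * ev v := by rw [iv_append]
        _ = iv inv p * (ev q * iv inv u) * ev v := by rw [hval]
        _ = (iv inv p * ev q) * (iv inv u * ev v) := by simp [mul_assoc]
        _ = iv inv s * ev t := hax
    obtain ⟨hps, hvt⟩ := nf_unique hS (OKw_append hp hw) hv hs ht hbeq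
    left
    refine ⟨q.length, ?_, ?_⟩
    · rw [Set.mem_Iic, hdec, List.length_append]; exact Nat.le_add_right _ _
    · have h1 : u.take q.length = q := by rw [hdec]; exact List.take_left
      have h2 : u.length - q.length = w.length := by rw [hdec]; simp
      have h3 : s.take (s.length - w.length) = p := by
        rw [← hps, List.length_append, Nat.add_sub_cancel]; exact List.take_left
      rw [hf]; dsimp only; rw [h1, h2, h3]

end PMaux


/-- A polycyclic monoid with the topology of the one-point
compactification of the discrete space S \ {0} is a compact Hausdorff space with
separately continuous multiplication. -/
theorem stmt15 {S : Type*} [MonoidWithZero S] (inv : S → S) (Λ : Set S)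
    (hS : IsPolycyclicMonoid S inv Λ)
    [TopologicalSpace S]
    (hτ : ∀ U : Set S, IsOpen U ↔ ((0 : S) ∈ U → (Uᶜ).Finite)) :
    CompactSpace S ∧ T2Space S ∧
      (∀ a : S, Continuous (fun x : S => a * x)) ∧
      (∀ a : S, Continuous (fun x : S => x * a)) := by
  classical
  refine ⟨?_, ?_, ?_, ?_⟩
  · -- compactness
    constructor
    rw [isCompact_iff_finite_subcover]
    intro ι U hUo hcover
    obtain ⟨i₀, hi₀⟩ : ∃ i, (0 : S) ∈ U i := by
      simpa using hcover (Set.mem_univ (0 : S))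
    have hF : (U i₀)ᶜ.Finite := (hτ (U i₀)).1 (hUo i₀) hi₀
    let f : S → ι := fun y => if h : ∃ i, y ∈ U i then h.choose else i₀
    refine ⟨insert i₀ (hF.toFinset.image f), ?_⟩
    intro x _
    by_cases hx : x ∈ U i₀
    · exact Set.mem_biUnion (Finset.mem_insert_self i₀ _) hx
    · have hex : ∃ i, x ∈ U i := by simpa using hcover (Set.mem_univ x)
      have hfx : x ∈ U (f x) := by
        simp only [f, dif_pos hex]
        exact hex.choose_spec
      exact Set.mem_biUnion
        (Finset.mem_insert_of_mem (Finset.mem_image.2 ⟨x, hF.mem_toFinset.2 hx, rfl⟩)) hfx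
  · -- Hausdorff
    constructor
    intro x y hxy
    by_cases hx : x = 0
    · subst hx
      have hy : y ≠ 0 := fun h => hxy h.symm
      refine ⟨{y}ᶜ, {y}, ?_, ?_, ?_, rfl, disjoint_compl_left⟩
      · rw [hτ]; intro _; simpa using Set.finite_singleton y
      · rw [hτ]; intro h0; exact (hy (Set.mem_singleton_iff.1 h0).symm).elim
      · exact fun h => hy (Set.mem_singleton_iff.1 h).symm
    · by_cases hy : y = 0
      · subst hy
        refine ⟨{x}, {x}ᶜ, ?_, ?_, rfl, ?_, disjoint_compl_right⟩
        · rw [hτ]; intro h0; exact (hx (Set.mem_singleton_iff.1 h0).symm).elim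
        · rw [hτ]; intro _; simpa using Set.finite_singleton x
        · exact fun h => hx (Set.mem_singleton_iff.1 h).symm
      · refine ⟨{x}, {y}, ?_, ?_, rfl, rfl, Set.disjoint_singleton.2 hxy⟩
        · rw [hτ]; intro h0; exact (hx (Set.mem_singleton_iff.1 h0).symm).elim
        · rw [hτ]; intro h0; exact (hy (Set.mem_singleton_iff.1 h0).symm).elim
  · -- left translations
    intro a
    rw [continuous_def]
    intro U hU
    rw [hτ]
    intro h0
    have h0U : (0 : S) ∈ U := by
      have h' : a * 0 ∈ U := h0
      rwa [mul_zero] at h'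
    have hUc : (Uᶜ).Finite := (hτ U).1 hU h0U
    have heq : ((fun x : S => a * x) ⁻¹' U)ᶜ = ⋃ b ∈ Uᶜ, {x : S | a * x = b} := by
      ext x
      simp only [Set.mem_compl_iff, Set.mem_preimage, Set.mem_iUnion, Set.mem_setOf_eq,
        exists_prop]
      exact ⟨fun h => ⟨a * x, h, rfl⟩, fun ⟨b, hb, he⟩ hm => hb (he ▸ hm)⟩
    rw [heq]
    exact hUc.biUnion fun b hb =>
      PMaux.left_fiber_finite hS a b (fun h => hb (h ▸ h0U))
  · -- right translations
    intro a
    rw [continuous_def]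
    intro U hU
    rw [hτ]
    intro h0
    have h0U : (0 : S) ∈ U := by
      have h' : (0 : S) * a ∈ U := h0
      rwa [zero_mul] at h'
    have hUc : (Uᶜ).Finite := (hτ U).1 hU h0U
    have heq : ((fun x : S => x * a) ⁻¹' U)ᶜ = ⋃ b ∈ Uᶜ, {x : S | x * a = b} := by
      ext x
      simp only [Set.mem_compl_iff, Set.mem_preimage, Set.mem_iUnion, Set.mem_setOf_eq,
        exists_prop]
      exact ⟨fun h => ⟨x * a, h, rfl⟩, fun ⟨b, hb, he⟩ hm => hb (he ▸ hm)⟩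
    rw [heq]
    exact hUc.biUnion fun b hb =>
      PMaux.right_fiber_finite hS a b (fun h => hb (h ▸ h0U))
end

section
/- Let S be a polycyclic monoid endowed with the topology τ = {U ⊆ S : if 0 ∈ U then S∖U is finite} (the topology of the one-point compactification of the discrete space S∖{0}, with 0 as the point at infinity). Then the multiplication map S × S → S is not jointly continuous; i.e., S with this topology is not a topological semigroup. -/
/-- A polycyclic monoid with the topology of the one-point
compactification of the discrete space S \ {0} is not a topological semigroup:
multiplication is not jointly continuous. -/
theorem stmt16 {S : Type*} [MonoidWithZero S] (inv : S → S) (Λ : Set S)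
    (hS : IsPolycyclicMonoid S inv Λ)
    [TopologicalSpace S]
    (hτ : ∀ U : Set S, IsOpen U ↔ ((0 : S) ∈ U → (Uᶜ).Finite)) :
    ¬ Continuous (fun p : S × S => p.1 * p.2) := by
  intro hcont
  -- Λ is nonempty
  obtain ⟨x, hxΛ⟩ : Λ.Nonempty := by
    by_contra h
    rw [Set.not_nonempty_iff_eq_empty] at h
    have hg := hS.generates
    rw [h, Set.image_empty, Set.union_empty, Subsemigroup.closure_empty] at hg
    have h0 : (0 : S) ∈ (⊥ : Subsemigroup S) := by rw [hg]; trivial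
    exact Subsemigroup.notMem_bot h0
  have hx1 : x * inv x = 1 := hS.gen_unit x hxΛ
  -- if inv x is a two-sided inverse of x, we get a contradiction
  have hC : inv x * x = 1 → False := by
    intro hjx
    by_cases hy : ∃ y ∈ Λ, y ≠ x
    · obtain ⟨y, hyΛ, hyx⟩ := hy
      have h0 : x * inv y = 0 := hS.gen_zero x hxΛ y hyΛ (Ne.symm hyx)
      have hinvy : inv y = 0 := by
        have : inv x * (x * inv y) = inv y := by
          rw [← mul_assoc, hjx, one_mul]
        rw [h0, mul_zero] at this
        exact this.symm
      have := hS.gen_unit y hyΛ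
      rw [hinvy, mul_zero] at this
      exact hS.zero_ne_one this
    · push_neg at hy
      -- all generators are units
      have hunit : ∀ s : S, IsUnit s := by
        intro s
        have hs : s ∈ Subsemigroup.closure (Λ ∪ inv '' Λ) := by
          rw [hS.generates]; trivial
        refine Subsemigroup.closure_induction (fun a ha => ?_)
          (fun a b _ _ ha hb => ha.mul hb) hs
        rcases ha with ha | ⟨b, hbΛ, rfl⟩
        · have : a = x := hy a ha
          subst this
          exact ⟨⟨a, inv a, hx1, hjx⟩, rfl⟩
        · have : b = x := hy b hbΛ
          subst this
          exact ⟨⟨inv b, b, hjx, hx1⟩, rfl⟩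
      obtain ⟨u, hu⟩ := hunit 0
      have := u.mul_inv
      rw [hu, zero_mul] at this
      exact hS.zero_ne_one this
  -- x^n * (inv x)^n = 1
  have hpow : ∀ n : ℕ, x ^ n * (inv x) ^ n = 1 := by
    intro n
    induction n with
    | zero => simp
    | succ n ih =>
      rw [pow_succ' x, pow_succ (inv x), mul_assoc, ← mul_assoc (x ^ n), ih, one_mul, hx1]
  -- positive powers of x are not 1
  have hxk : ∀ k : ℕ, 0 < k → x ^ k ≠ 1 := by
    intro k hk h1
    apply hC
    obtain ⟨m, rfl⟩ : ∃ m, k = m + 1 := ⟨k - 1, (Nat.succ_pred_eq_of_pos hk).symm⟩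
    have ha : x * x ^ m = 1 := by rw [← pow_succ']; exact h1
    have hb : x ^ m * x = 1 := by rw [← pow_succ]; exact h1
    have heq : x ^ m = inv x := hS.inv_unique x (x ^ m)
      (by rw [ha, one_mul]) (by rw [hb, one_mul])
    rw [← heq]; exact hb
  -- positive powers of inv x are not 1
  have hjk : ∀ k : ℕ, 0 < k → (inv x) ^ k ≠ 1 := by
    intro k hk h1
    apply hC
    obtain ⟨m, rfl⟩ : ∃ m, k = m + 1 := ⟨k - 1, (Nat.succ_pred_eq_of_pos hk).symm⟩
    have ha : inv x * (inv x) ^ m = 1 := by rw [← pow_succ']; exact h1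
    have hb : (inv x) ^ m * inv x = 1 := by rw [← pow_succ]; exact h1
    have h2 : x = inv (inv x) :=
      hS.inv_unique (inv x) x (hS.inv_inverse x).2 (hS.inv_inverse x).1
    have h3 : (inv x) ^ m = inv (inv x) := hS.inv_unique (inv x) ((inv x) ^ m)
      (by rw [ha, one_mul]) (by rw [hb, one_mul])
    have hx_eq : x = (inv x) ^ m := h2.trans h3.symm
    nth_rewrite 2 [hx_eq]
    exact ha
  -- powers of x are injective
  have keyx : ∀ m n : ℕ, m < n → x ^ m = x ^ n → False := by
    intro m n hmn h
    have : x ^ (n - m) = 1 := by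
      calc x ^ (n - m) = x ^ (n - m) * (x ^ m * (inv x) ^ m) := by
            rw [hpow m, mul_one]
        _ = x ^ (n - m) * x ^ m * (inv x) ^ m := by rw [mul_assoc]
        _ = x ^ n * (inv x) ^ m := by rw [← pow_add, Nat.sub_add_cancel hmn.le]
        _ = x ^ m * (inv x) ^ m := by rw [← h]
        _ = 1 := hpow m
    exact hxk (n - m) (by omega) this
  have hinjx : Function.Injective (fun n : ℕ => x ^ n) := by
    intro m n h
    dsimp at h
    rcases Nat.lt_trichotomy m n with hmn | hmn | hmn
    · exact absurd h (fun h => keyx m n hmn h)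
    · exact hmn
    · exact absurd h.symm (fun h => keyx n m hmn h)
  -- powers of inv x are injective
  have keyj : ∀ m n : ℕ, m < n → (inv x) ^ m = (inv x) ^ n → False := by
    intro m n hmn h
    have : (inv x) ^ (n - m) = 1 := by
      calc (inv x) ^ (n - m) = (x ^ m * (inv x) ^ m) * (inv x) ^ (n - m) := by
            rw [hpow m, one_mul]
        _ = x ^ m * ((inv x) ^ m * (inv x) ^ (n - m)) := by rw [mul_assoc]
        _ = x ^ m * (inv x) ^ n := by rw [← pow_add, Nat.add_sub_cancel' hmn.le]
        _ = x ^ m * (inv x) ^ m := by rw [← h]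
        _ = 1 := hpow m
    exact hjk (n - m) (by omega) this
  have hinjj : Function.Injective (fun n : ℕ => (inv x) ^ n) := by
    intro m n h
    dsimp at h
    rcases Nat.lt_trichotomy m n with hmn | hmn | hmn
    · exact absurd h (fun h => keyj m n hmn h)
    · exact hmn
    · exact absurd h.symm (fun h => keyj n m hmn h)
  -- topology argument
  have hU : IsOpen ({1}ᶜ : Set S) := by
    rw [hτ]
    intro _
    simp
  have hpre : IsOpen ((fun p : S × S => p.1 * p.2) ⁻¹' ({1}ᶜ)) :=
    hcont.isOpen_preimage _ hU
  have hmem : ((0 : S), (0 : S)) ∈ (fun p : S × S => p.1 * p.2) ⁻¹' ({1}ᶜ) := by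
    simp only [Set.mem_preimage, Set.mem_compl_iff, Set.mem_singleton_iff]
    rw [zero_mul]
    exact hS.zero_ne_one
  obtain ⟨u, v, hu, hv, h0u, h0v, huv⟩ := (isOpen_prod_iff.mp hpre) 0 0 hmem
  have hufin : (uᶜ).Finite := (hτ u).mp hu h0u
  have hvfin : (vᶜ).Finite := (hτ v).mp hv h0v
  have hF1 : ((fun n : ℕ => x ^ n) ⁻¹' uᶜ).Finite :=
    hufin.preimage hinjx.injOn
  have hF2 : ((fun n : ℕ => (inv x) ^ n) ⁻¹' vᶜ).Finite :=
    hvfin.preimage hinjj.injOn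
  have hF : ((fun n : ℕ => x ^ n) ⁻¹' uᶜ ∪ (fun n : ℕ => (inv x) ^ n) ⁻¹' vᶜ ∪ {0}).Finite :=
    (hF1.union hF2).union (Set.finite_singleton 0)
  obtain ⟨n, hn⟩ := hF.infinite_compl.nonempty
  simp only [Set.mem_compl_iff, Set.mem_union, Set.mem_preimage, Set.mem_singleton_iff,
    not_or, not_not] at hn
  obtain ⟨⟨hnu, hnv⟩, hn0⟩ := hn
  have : (x ^ n, (inv x) ^ n) ∈ u ×ˢ v := ⟨hnu, hnv⟩
  have := huv this
  simp only [Set.mem_preimage, Set.mem_compl_iff, Set.mem_singleton_iff] at this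
  exact this (hpow n)
end
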